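/- Let A be a commutative noetherian ring and f: M → N a homomorphism of finitely generated A-modules. The induced map f^tl: M^tl → N^tl on torsionless quotients (the restriction of the double dual map f**: M** → N** to the images of the evaluation maps) is surjective if and only if the induced map R(f): R(M) → R(N) of Rees algebras is surjective. -/

import Mathlib

open Module LinearMap TensorProduct

/-- The relation on the tensor algebra whose quotient is the symmetric algebra. -/
inductive SymRel (A : Type) [CommRing A] (M : Type) [AddCommGroup M] [Module A M] :
    TensorAlgebra A M → TensorAlgebra A M → Prop
  | mul_comm (x y : M) : SymRel A M (TensorAlgebra.ι A x * TensorAlgebra.ι A y)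
      (TensorAlgebra.ι A y * TensorAlgebra.ι A x)

/-- The symmetric algebra `Sym(M)` of a module `M`. -/
abbrev SymmAlg (A : Type) [CommRing A] (M : Type) [AddCommGroup M] [Module A M] : Type :=
  RingQuot (SymRel A M)

variable {A : Type} [CommRing A] {M N L : Type} [AddCommGroup M] [Module A M]
  [AddCommGroup N] [Module A N] [AddCommGroup L] [Module A L]

private lemma symmAlg_comm_aux (x y : TensorAlgebra A M) :
    RingQuot.mkAlgHom A (SymRel A M) x * RingQuot.mkAlgHom A (SymRel A M) y =
      RingQuot.mkAlgHom A (SymRel A M) y * RingQuot.mkAlgHom A (SymRel A M) x := by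
  induction x using TensorAlgebra.induction with
  | algebraMap r => simp [Algebra.commutes]
  | ι m =>
    induction y using TensorAlgebra.induction with
    | algebraMap r => simp [Algebra.commutes]
    | ι n => simpa [map_mul] using (RingQuot.mkAlgHom_rel A (SymRel.mul_comm m n))
    | mul a b ha hb => rw [map_mul, ← mul_assoc, ha, mul_assoc, hb, ← mul_assoc]
    | add a b ha hb => rw [map_add, mul_add, add_mul, ha, hb]
  | mul a b ha hb => rw [map_mul, mul_assoc, hb, ← mul_assoc, ha, mul_assoc]
  | add a b ha hb => rw [map_add, add_mul, mul_add, ha, hb]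

noncomputable instance (A : Type) [CommRing A] (M : Type) [AddCommGroup M] [Module A M] :
    CommRing (SymmAlg A M) :=
  { (inferInstance : Ring (SymmAlg A M)) with
    mul_comm := fun a b => by
      obtain ⟨x, rfl⟩ := RingQuot.mkAlgHom_surjective A (SymRel A M) a
      obtain ⟨y, rfl⟩ := RingQuot.mkAlgHom_surjective A (SymRel A M) b
      exact symmAlg_comm_aux x y }

/-- The canonical inclusion of `M` into the degree-one part of `Sym(M)`. -/
noncomputable def symι (A : Type) [CommRing A] {M : Type} [AddCommGroup M] [Module A M] :
    M →ₗ[A] SymmAlg A M :=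
  (RingQuot.mkAlgHom A (SymRel A M)).toLinearMap ∘ₗ TensorAlgebra.ι A

/-- Functoriality of the symmetric algebra: `Sym(g) : Sym(M) → Sym(N)`. -/
noncomputable def symMap (A : Type) [CommRing A] {M N : Type} [AddCommGroup M] [Module A M]
    [AddCommGroup N] [Module A N] (g : M →ₗ[A] N) : SymmAlg A M →ₐ[A] SymmAlg A N :=
  RingQuot.liftAlgHom A ⟨TensorAlgebra.lift A ((symι A) ∘ₗ g), by
    intro x y h
    cases h with
    | mul_comm a b => simp [mul_comm]⟩

@[simp] lemma symMap_ι (g : M →ₗ[A] N) (m : M) :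
    symMap A g (symι A m) = symι A (g m) := by
  simp [symMap, symι, RingQuot.liftAlgHom_mkAlgHom_apply]

lemma symmAlg_hom_ext {B : Type} [Semiring B] [Algebra A B] {f g : SymmAlg A M →ₐ[A] B}
    (h : ∀ m : M, f (symι A m) = g (symι A m)) : f = g := by
  have key : f.comp (RingQuot.mkAlgHom A (SymRel A M)) =
      g.comp (RingQuot.mkAlgHom A (SymRel A M)) := by
    apply TensorAlgebra.hom_ext
    apply LinearMap.ext
    intro m
    simpa [symι] using h m
  apply AlgHom.ext
  intro x
  obtain ⟨x, rfl⟩ := RingQuot.mkAlgHom_surjective A (SymRel A M) x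
  exact AlgHom.congr_fun key x

lemma symMap_comp_apply (g : N →ₗ[A] L) (f : M →ₗ[A] N) (x : SymmAlg A M) :
    symMap A (g ∘ₗ f) x = symMap A g (symMap A f x) := by
  have : symMap A (g ∘ₗ f) = (symMap A g).comp (symMap A f) := by
    apply symmAlg_hom_ext
    intro m
    simp
  rw [this]; rfl

/-- The data of a linear map from `M` into a finitely generated free module. -/
structure FreeTarget (A : Type) [CommRing A] (M : Type) [AddCommGroup M] [Module A M] where
  E : Type
  [instAddCommGroup : AddCommGroup E]
  [instModule : Module A E]
  [instFree : Module.Free A E]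
  [instFinite : Module.Finite A E]
  g : M →ₗ[A] E

attribute [instance] FreeTarget.instAddCommGroup FreeTarget.instModule
  FreeTarget.instFree FreeTarget.instFinite

/-- The ideal `I(M) ⊆ Sym(M)`: the intersection over all maps `g : M → E` into finitely
generated free modules of the kernels of `Sym(g)`. -/
noncomputable def reesIdeal (A : Type) [CommRing A] (M : Type) [AddCommGroup M]
    [Module A M] : Ideal (SymmAlg A M) :=
  ⨅ d : FreeTarget A M, RingHom.ker (symMap A d.g)

lemma reesIdeal_le_comap (f : M →ₗ[A] N) :
    reesIdeal A M ≤ Ideal.comap (symMap A f) (reesIdeal A N) := by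
  intro x hx
  simp only [reesIdeal, Ideal.mem_iInf] at hx
  simp only [Ideal.mem_comap, reesIdeal, Ideal.mem_iInf]
  intro d
  have hd := hx ⟨d.E, d.g ∘ₗ f⟩
  rw [RingHom.mem_ker] at hd ⊢
  rw [← symMap_comp_apply]
  exact hd

/-- The Rees algebra `R(M) = Sym(M)/I(M)` of a module `M`. -/
noncomputable abbrev ReesAlg (A : Type) [CommRing A] (M : Type) [AddCommGroup M]
    [Module A M] : Type :=
  SymmAlg A M ⧸ reesIdeal A M

/-- The induced map `R(f) : R(M) → R(N)` of Rees algebras. -/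
noncomputable def reesMap (A : Type) [CommRing A] {M N : Type} [AddCommGroup M]
    [Module A M] [AddCommGroup N] [Module A N] (f : M →ₗ[A] N) :
    ReesAlg A M →ₐ[A] ReesAlg A N :=
  Ideal.quotientMapₐ (reesIdeal A N) (symMap A f) (reesIdeal_le_comap f)

/-! The Rees algebra `R(N)` is generated by the degree-one classes of `N`, and the degree-one
part of `I(N)` is exactly `ker ev_N`: a functional is a map into the free module `A`, and
conversely every map into a finitely generated free (hence reflexive) module factors through
`ev_N`. So `R(f)` is onto iff every `n : N` agrees with some `f m` modulo `ker ev_N`, which is the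
surjectivity of `f^tl`. -/

section DegreeOne

variable {A : Type} [CommRing A] {M N : Type} [AddCommGroup M] [Module A M]
  [AddCommGroup N] [Module A N]

/- The square-zero extension `A ⊕ M` is built from a bimodule; over a commutative ring we let
`A` act on the right as on the left. -/
local instance : Module Aᵐᵒᵖ M := Module.compHom M ((RingHom.id A).fromOpposite mul_comm)

local instance : IsCentralScalar A M := ⟨fun _ _ => rfl⟩

local instance : SMulCommClass A Aᵐᵒᵖ M := ⟨fun r s m => smul_comm r s.unop m⟩

noncomputable def symmAlgToTrivSqZeroExt : SymmAlg A M →ₐ[A] TrivSqZeroExt A M :=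
  RingQuot.liftAlgHom A ⟨TensorAlgebra.lift A (TrivSqZeroExt.inrHom A M), by
    rintro _ _ ⟨a, b⟩
    simp [TrivSqZeroExt.inr_mul_inr]⟩

@[simp] lemma symmAlgToTrivSqZeroExt_symι (m : M) :
    symmAlgToTrivSqZeroExt (symι A m) = TrivSqZeroExt.inr m := by
  simp [symmAlgToTrivSqZeroExt, symι, RingQuot.liftAlgHom_mkAlgHom_apply]

variable (A) in
/-- The projection of `Sym(M)` onto its degree-one part `M`. -/
noncomputable def symιInv : SymmAlg A M →ₗ[A] M :=
  TrivSqZeroExt.sndHom A M ∘ₗ symmAlgToTrivSqZeroExt.toLinearMap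

@[simp] lemma symιInv_symι (m : M) : symιInv A (symι A m) = m := by
  simp [symιInv]

lemma symιInv_symMap (f : M →ₗ[A] N) (x : SymmAlg A M) :
    symιInv A (symMap A f x) = f (symιInv A x) := by
  have h : symmAlgToTrivSqZeroExt.comp (symMap A f) =
      (TrivSqZeroExt.map f).comp symmAlgToTrivSqZeroExt := by
    apply symmAlg_hom_ext
    simp
  simpa [symιInv] using congrArg TrivSqZeroExt.snd (AlgHom.congr_fun h x)

end DegreeOne

section ReesAlgebra

variable {A : Type} [CommRing A] {M N : Type} [AddCommGroup M] [Module A M]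
  [AddCommGroup N] [Module A N]

lemma eval_symιInv_eq_zero_of_mem_reesIdeal {x : SymmAlg A N} (hx : x ∈ reesIdeal A N) :
    Dual.eval A N (symιInv A x) = 0 := by
  ext φ
  have hφ : symMap A φ x = 0 := (Ideal.mem_iInf.mp hx) ⟨A, φ⟩
  simpa [hφ] using (symιInv_symMap φ x).symm

lemma symι_mem_reesIdeal_of_eval_eq_zero {n : N} (hn : Dual.eval A N n = 0) :
    symι A n ∈ reesIdeal A N := by
  refine Ideal.mem_iInf.mpr fun d => ?_
  have hgn : d.g n = 0 := by
    apply (bijective_dual_eval A d.E).injective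
    rw [map_zero, ← LinearMap.comp_apply, ← Dual.eval_naturality, LinearMap.comp_apply, hn,
      map_zero]
  rw [RingHom.mem_ker, symMap_ι, hgn, map_zero]

variable (A N) in
noncomputable def reesι : N →ₗ[A] ReesAlg A N :=
  (Ideal.Quotient.mkₐ A (reesIdeal A N)).toLinearMap ∘ₗ symι A

lemma reesι_apply (n : N) : reesι A N n = Ideal.Quotient.mk (reesIdeal A N) (symι A n) :=
  rfl

lemma adjoin_range_reesι : Algebra.adjoin A (Set.range (reesι A N)) = ⊤ := by
  let q := (Ideal.Quotient.mkₐ A (reesIdeal A N)).comp (RingQuot.mkAlgHom A (SymRel A N))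
  have hq : Function.Surjective q :=
    (Ideal.Quotient.mkₐ_surjective A _).comp (RingQuot.mkAlgHom_surjective A _)
  have hrange : Set.range (reesι A N) = q '' Set.range (TensorAlgebra.ι A) := by
    rw [← Set.range_comp]
    rfl
  rw [hrange, Algebra.adjoin_image, TensorAlgebra.adjoin_range_ι, Algebra.map_top,
    AlgHom.range_eq_top]
  exact hq

lemma reesι_eq_of_eval_eq {n n' : N} (h : Dual.eval A N n = Dual.eval A N n') :
    reesι A N n = reesι A N n' := by
  rw [← sub_eq_zero, ← map_sub, reesι_apply, Ideal.Quotient.eq_zero_iff_mem]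
  exact symι_mem_reesIdeal_of_eval_eq_zero (by rw [map_sub, h, sub_self])

lemma eval_symιInv_eq_of_mk_eq {x y : SymmAlg A N}
    (h : Ideal.Quotient.mk (reesIdeal A N) x = Ideal.Quotient.mk (reesIdeal A N) y) :
    Dual.eval A N (symιInv A x) = Dual.eval A N (symιInv A y) := by
  rw [← sub_eq_zero, ← map_sub, ← map_sub]
  exact eval_symιInv_eq_zero_of_mem_reesIdeal (Ideal.Quotient.eq.mp h)

lemma reesMap_mk (f : M →ₗ[A] N) (x : SymmAlg A M) :
    reesMap A f (Ideal.Quotient.mk (reesIdeal A M) x) =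
      Ideal.Quotient.mk (reesIdeal A N) (symMap A f x) :=
  rfl

lemma reesMap_reesι (f : M →ₗ[A] N) (m : M) : reesMap A f (reesι A M m) = reesι A N (f m) := by
  rw [reesι_apply, reesMap_mk, symMap_ι, reesι_apply]

lemma reesι_mem_range_reesMap_iff (f : M →ₗ[A] N) (n : N) :
    reesι A N n ∈ (reesMap A f).range ↔ ∃ m, Dual.eval A N (f m) = Dual.eval A N n := by
  constructor
  · rintro ⟨y, hy⟩
    obtain ⟨x, rfl⟩ := Ideal.Quotient.mk_surjective y
    refine ⟨symιInv A x, ?_⟩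
    rw [← symιInv_symMap, ← symιInv_symι (A := A) n]
    exact eval_symιInv_eq_of_mk_eq hy
  · rintro ⟨m, hm⟩
    exact ⟨reesι A M m, (reesMap_reesι f m).trans (reesι_eq_of_eval_eq hm)⟩

lemma surjective_reesMap_iff (f : M →ₗ[A] N) :
    Function.Surjective (reesMap A f) ↔ ∀ n, reesι A N n ∈ (reesMap A f).range := by
  rw [← AlgHom.range_eq_top, ← top_le_iff, ← adjoin_range_reesι, Algebra.adjoin_le_iff,
    Set.range_subset_iff]
  rfl

lemma range_eval_le_map_dualMap_dualMap_iff (f : M →ₗ[A] N) :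
    range (Dual.eval A N) ≤ Submodule.map f.dualMap.dualMap (range (Dual.eval A M)) ↔
      ∀ n, ∃ m, Dual.eval A N (f m) = Dual.eval A N n := by
  constructor
  · intro h n
    obtain ⟨_, ⟨m, rfl⟩, hm⟩ := h ⟨n, rfl⟩
    exact ⟨m, hm⟩
  · rintro h _ ⟨n, rfl⟩
    obtain ⟨m, hm⟩ := h n
    exact ⟨_, ⟨m, rfl⟩, hm⟩

end ReesAlgebra

theorem stmt9_general (A : Type) [CommRing A]
    (M N : Type) [AddCommGroup M] [Module A M]
    [AddCommGroup N] [Module A N]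
    (f : M →ₗ[A] N) :
    (LinearMap.range (Module.Dual.eval A N) ≤
        Submodule.map f.dualMap.dualMap (LinearMap.range (Module.Dual.eval A M))) ↔
      Function.Surjective (reesMap A f) := by
  rw [range_eval_le_map_dualMap_dualMap_iff, surjective_reesMap_iff]
  exact forall_congr' fun n => (reesι_mem_range_reesMap_iff f n).symm

/-- For `f : M → N`, the induced map `f^tl : M^tl → N^tl` on torsionless quotients is
surjective iff `R(f) : R(M) → R(N)` is surjective. -/
theorem stmt9 (A : Type) [CommRing A] [IsNoetherianRing A]
    (M N : Type) [AddCommGroup M] [Module A M] [Module.Finite A M]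
    [AddCommGroup N] [Module A N] [Module.Finite A N]
    (f : M →ₗ[A] N) :
    (LinearMap.range (Module.Dual.eval A N) ≤
        Submodule.map f.dualMap.dualMap (LinearMap.range (Module.Dual.eval A M))) ↔
      Function.Surjective (reesMap A f) :=
  stmt9_general A M N f
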